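/- arXiv:2007.00076 — 2 statements merged into one kernel-verified Lean document; each statement's English description precedes it below -/
import Mathlib

section
/- Let S be a finite set, s0 ∈ S, and let E ⊆ S × S be a directed edge relation on S. Suppose (i) every vertex s ∈ S has at least one out-neighbor (there exists s' with (s,s') ∈ E), and (ii) the subgraph induced on S \ {s0} is acyclic (there is no directed cycle all of whose vertices lie in S \ {s0}). Then for every vertex s ∈ S there exists a directed walk in E from s to s0. -/
/-- Let `S` be a finite set, `s0 ∈ S`, and `E` a directed edge
relation on `S`. If every vertex has at least one out-neighbor, and the subgraph
induced on `S \ {s0}` is acyclic (there is no directed cycle all of whose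
vertices avoid `s0`), then every vertex has a directed walk to `s0`. -/
theorem every_state_reaches_s0
    {S : Type*} [Fintype S] (s0 : S) (E : S → S → Prop)
    (hout : ∀ s : S, ∃ s' : S, E s s')
    (hacyc : ¬ ∃ v : S, Relation.TransGen (fun x y => E x y ∧ x ≠ s0 ∧ y ≠ s0) v v) :
    ∀ s : S, Relation.ReflTransGen E s s0 := by
  classical
  intro s
  by_contra hs
  -- T : vertices that do not reach s0
  let T := {x : S // ¬ Relation.ReflTransGen E x s0}
  haveI : Fintype T := Subtype.fintype _
  -- every vertex of T has a successor in T
  have hsucc : ∀ x : T, ∃ y : T, E x.1 y.1 := by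
    rintro ⟨x, hx⟩
    obtain ⟨y, hy⟩ := hout x
    refine ⟨⟨y, fun hyR => hx ?_⟩, hy⟩
    exact Relation.ReflTransGen.head hy hyR
  choose f hf using hsucc
  have hne : ∀ x : T, x.1 ≠ s0 := by
    rintro ⟨x, hx⟩ h
    exact hx (h ▸ Relation.ReflTransGen.refl)
  -- iterates of f from ⟨s, hs⟩ must repeat
  have hninj : ¬ Function.Injective (fun n : ℕ => f^[n] ⟨s, hs⟩) :=
    not_injective_infinite_finite _
  simp only [Function.Injective, not_forall] at hninj
  obtain ⟨i, j, hij, hne'⟩ := hninj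
  wlog hlt : i < j generalizing i j
  · exact this j i hij.symm (Ne.symm hne') (by omega)
  set v : T := f^[i] ⟨s, hs⟩ with hv
  have hcyc : f^[j - i] v = v := by
    have : f^[j - i] (f^[i] ⟨s, hs⟩) = f^[j] ⟨s, hs⟩ := by
      rw [← Function.iterate_add_apply]
      congr 1; omega
    rw [hv, this, ← hij]
  -- build a TransGen cycle
  have key : ∀ n : ℕ, 0 < n → ∀ x : T,
      Relation.TransGen (fun a b => E a b ∧ a ≠ s0 ∧ b ≠ s0) x.1 (f^[n] x).1 := by
    intro n hn
    induction n with
    | zero => omega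
    | succ m ih =>
      intro x
      rcases Nat.eq_zero_or_pos m with hm | hm
      · subst hm
        exact Relation.TransGen.single ⟨hf x, hne x, hne (f x)⟩
      · have := ih hm x
        rw [Function.iterate_succ_apply']
        exact this.tail ⟨hf _, hne _, hne _⟩
  exact hacyc ⟨v.1, by have := key (j - i) (by omega) v; rwa [hcyc] at this⟩
end

section
/- Let S, A_D, A_A be finite nonempty types and define Ω_D(π_A), Ω_A(π_D) and Δ(π_D, π_A) as follows: Ω_D(π_A)(s,d) = ρ_D + v_D(s) − ∑_{a} π_A(s,a) ∑_{s'} P(s,d,a,s') ( r_D(s,d,a,s') + v_D(s') ), Ω_A(π_D)(s,a) = ρ_A + v_A(s) − ∑_{d} π_D(s,d) ∑_{s'} P(s,d,a,s') ( r_A(s,d,a,s') + v_A(s') ), and Δ(π_D, π_A) = ∑_{s,d} Ω_D(π_A)(s,d) π_D(s,d) + ∑_{s,a} Ω_A(π_D)(s,a) π_A(s,a), where P, r_D, r_A, v_D, v_A, ρ_D, ρ_A are arbitrary fixed real data. Fix a state s̄ and action d̄ ∈ A_D, suppose π_D(s̄,d̄) ≥ 0, and let g denote the partial derivative of Δ with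 respect to the coordinate π_D(s̄,d̄). For δ ≥ 0 and c > 0, let π_D' agree with π_D except that π_D'(s̄,d̄) = π_D(s̄,d̄) − δ · √(π_D(s̄,d̄)) · |Ω_D(π_A)(s̄,d̄)| · tanh(c·g). Then Δ is affine in the single coordinate π_D(s̄,d̄), and exactly Δ(π_D', π_A) = Δ(π_D, π_A) − δ · √(π_D(s̄,d̄)) · |Ω_D(π_A)(s̄,d̄)| · g · tanh(c·g) ≤ Δ(π_D, π_A). In particular the policy update of the RL-ARNE algorithm moves in a descent direction of Δ. -/
open Finset

section DeltaDescent

variable {S AD AA : Type*} [Fintype S] [Fintype AD] [Fintype AA]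
  [Nonempty S] [Nonempty AD] [Nonempty AA]
  [DecidableEq S] [DecidableEq AD] [DecidableEq AA]

/-- `Ω_D(π_A)(s,d) = ρ_D + v_D(s) − ∑_a π_A(s,a) ∑_{s'} P(s,d,a,s')(r_D(s,d,a,s') + v_D(s'))`. -/
noncomputable def OmegaD (P rD : S → AD → AA → S → ℝ) (vD : S → ℝ) (ρD : ℝ)
    (πA : S → AA → ℝ) (s : S) (d : AD) : ℝ :=
  ρD + vD s - ∑ a, πA s a * ∑ s', P s d a s' * (rD s d a s' + vD s')

/-- `Ω_A(π_D)(s,a) = ρ_A + v_A(s) − ∑_d π_D(s,d) ∑_{s'} P(s,d,a,s')(r_A(s,d,a,s') + v_A(s'))`. -/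
noncomputable def OmegaA (P rA : S → AD → AA → S → ℝ) (vA : S → ℝ) (ρA : ℝ)
    (πD : S → AD → ℝ) (s : S) (a : AA) : ℝ :=
  ρA + vA s - ∑ d, πD s d * ∑ s', P s d a s' * (rA s d a s' + vA s')

/-- `Δ(π_D, π_A) = ∑_{s,d} Ω_D(π_A)(s,d) π_D(s,d) + ∑_{s,a} Ω_A(π_D)(s,a) π_A(s,a)`. -/
noncomputable def Delta (P rD rA : S → AD → AA → S → ℝ) (vD vA : S → ℝ)
    (ρD ρA : ℝ) (πD : S → AD → ℝ) (πA : S → AA → ℝ) : ℝ :=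
  (∑ s, ∑ d, OmegaD P rD vD ρD πA s d * πD s d) +
    ∑ s, ∑ a, OmegaA P rA vA ρA πD s a * πA s a

/-- Update a single coordinate `(sb, ab)` of a policy to the value `t`. -/
noncomputable def updCoord {S A : Type*} [DecidableEq S] [DecidableEq A]
    (π : S → A → ℝ) (sb : S) (ab : A) (t : ℝ) : S → A → ℝ :=
  fun s a => if s = sb ∧ a = ab then t else π s a

lemma sum_ite_sb {S AA : Type*} [Fintype S] [Fintype AA] [DecidableEq S]
    (sb : S) (F : S → AA → ℝ) :
    (∑ s, ∑ a, if s = sb then F s a else 0) = ∑ a, F sb a := by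
  have h : ∀ s, (∑ a, if s = sb then F s a else 0) = if s = sb then ∑ a, F s a else 0 := by
    intro s; split <;> simp
  simp only [h, Finset.sum_ite_eq' Finset.univ sb, Finset.mem_univ, if_true]

lemma sum_ite_pair {S AD : Type*} [Fintype S] [Fintype AD] [DecidableEq S] [DecidableEq AD]
    (sb : S) (db : AD) (F : S → AD → ℝ) :
    (∑ s, ∑ d, if s = sb ∧ d = db then F s d else 0) = F sb db := by
  simp only [ite_and]
  have h : ∀ s, (∑ d, if s = sb then if d = db then F s d else 0 else 0)
      = if s = sb then F s db else 0 := by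
    intro s; split <;> simp [Finset.sum_ite_eq' Finset.univ db]
  simp only [h, Finset.sum_ite_eq' Finset.univ sb, Finset.mem_univ, if_true]

lemma delta_upd_eq (P rD rA : S → AD → AA → S → ℝ) (vD vA : S → ℝ) (ρD ρA : ℝ)
    (πD : S → AD → ℝ) (πA : S → AA → ℝ) (sb : S) (db : AD) (t : ℝ) :
    Delta P rD rA vD vA ρD ρA (updCoord πD sb db t) πA =
      Delta P rD rA vD vA ρD ρA πD πA +
        (OmegaD P rD vD ρD πA sb db -
          ∑ a, (∑ s', P sb db a s' * (rA sb db a s' + vA s')) * πA sb a) *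
          (t - πD sb db) := by
  have upd_eq : ∀ s d, updCoord πD sb db t s d
      = πD s d + (if s = sb ∧ d = db then t - πD sb db else 0) := by
    intro s d
    by_cases h : s = sb ∧ d = db
    · obtain ⟨h1, h2⟩ := h; subst h1; subst h2; simp [updCoord]
    · simp [updCoord, h]
  have hOmegaA : ∀ s a, OmegaA P rA vA ρA (updCoord πD sb db t) s a
      = OmegaA P rA vA ρA πD s a -
        (if s = sb then (t - πD sb db) * ∑ s', P s db a s' * (rA s db a s' + vA s') else 0) := by
    intro s a
    simp only [OmegaA, upd_eq, add_mul, Finset.sum_add_distrib, ite_mul, zero_mul]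
    by_cases h : s = sb
    · subst h
      simp [Finset.sum_ite_eq', sub_sub]
    · simp [h]
  have hfirst : ∑ s, ∑ d, OmegaD P rD vD ρD πA s d * updCoord πD sb db t s d
      = (∑ s, ∑ d, OmegaD P rD vD ρD πA s d * πD s d)
        + OmegaD P rD vD ρD πA sb db * (t - πD sb db) := by
    simp only [upd_eq, mul_add, Finset.sum_add_distrib, mul_ite, mul_zero]
    congr 1
    exact sum_ite_pair sb db (fun s d => OmegaD P rD vD ρD πA s d * (t - πD sb db))
  have hsecond : ∑ s, ∑ a, OmegaA P rA vA ρA (updCoord πD sb db t) s a * πA s a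
      = (∑ s, ∑ a, OmegaA P rA vA ρA πD s a * πA s a)
        - (t - πD sb db) * ∑ a, (∑ s', P sb db a s' * (rA sb db a s' + vA s')) * πA sb a := by
    simp only [hOmegaA, sub_mul, Finset.sum_sub_distrib, ite_mul, zero_mul]
    congr 1
    rw [sum_ite_sb sb
      (fun s a => (t * ∑ s', P s db a s' * (rA s db a s' + vA s')) * πA s a
        - (πD sb db * ∑ s', P s db a s' * (rA s db a s' + vA s')) * πA s a)]
    rw [Finset.sum_sub_distrib, Finset.mul_sum, Finset.mul_sum]
    congr 1 <;> exact Finset.sum_congr rfl fun a _ => by ring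
  simp only [Delta, hfirst, hsecond]
  ring

/-- **Lemma VI.10.** `Δ` is affine in each single coordinate of
`π_D`, and the RL-ARNE policy update
`π_D(sb,db) ↦ π_D(sb,db) − δ √(π_D(sb,db)) |Ω_D(π_A)(sb,db)| tanh(c·g)`, where
`g` is the partial derivative of `Δ` with respect to that coordinate, decreases
`Δ` by exactly `δ √(π_D(sb,db)) |Ω_D(π_A)(sb,db)| · g · tanh(c·g) ≥ 0`;
in particular the update moves in a descent direction of `Δ`. -/
theorem policy_update_descent
    (P rD rA : S → AD → AA → S → ℝ) (vD vA : S → ℝ) (ρD ρA : ℝ)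
    (πD : S → AD → ℝ) (πA : S → AA → ℝ)
    (sb : S) (db : AD)
    (hπ : 0 ≤ πD sb db)
    (δ : ℝ) (hδ : 0 ≤ δ) (c : ℝ) (hc : 0 < c) (g : ℝ)
    (hg : HasDerivAt
      (fun t : ℝ => Delta P rD rA vD vA ρD ρA (updCoord πD sb db t) πA)
      g (πD sb db)) :
    (∃ α β : ℝ, ∀ t : ℝ,
      Delta P rD rA vD vA ρD ρA (updCoord πD sb db t) πA = α * t + β) ∧
    Delta P rD rA vD vA ρD ρA
        (updCoord πD sb db
          (πD sb db -
            δ * Real.sqrt (πD sb db) * |OmegaD P rD vD ρD πA sb db| *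
              Real.tanh (c * g))) πA =
      Delta P rD rA vD vA ρD ρA πD πA -
        δ * Real.sqrt (πD sb db) * |OmegaD P rD vD ρD πA sb db| * g *
          Real.tanh (c * g) ∧
    Delta P rD rA vD vA ρD ρA
        (updCoord πD sb db
          (πD sb db -
            δ * Real.sqrt (πD sb db) * |OmegaD P rD vD ρD πA sb db| *
              Real.tanh (c * g))) πA ≤
      Delta P rD rA vD vA ρD ρA πD πA := by

  set α := OmegaD P rD vD ρD πA sb db -
      ∑ a, (∑ s', P sb db a s' * (rA sb db a s' + vA s')) * πA sb a with hα
  set D := Delta P rD rA vD vA ρD ρA πD πA with hD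
  have key : ∀ t, Delta P rD rA vD vA ρD ρA (updCoord πD sb db t) πA
      = D + α * (t - πD sb db) := fun t =>
    delta_upd_eq P rD rA vD vA ρD ρA πD πA sb db t
  have hg' : HasDerivAt
      (fun t : ℝ => Delta P rD rA vD vA ρD ρA (updCoord πD sb db t) πA)
      α (πD sb db) := by
    have : HasDerivAt (fun t : ℝ => D + α * (t - πD sb db)) α (πD sb db) := by
      simpa using (((hasDerivAt_id (πD sb db)).sub_const (πD sb db)).const_mul α).const_add D
    exact this.congr_of_eventuallyEq (Filter.Eventually.of_forall fun t => key t)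
  have hgα : g = α := hg.unique hg'
  have htanh : 0 ≤ g * Real.tanh (c * g) := by
    rcases le_or_gt 0 g with h | h
    · apply mul_nonneg h
      rw [Real.tanh_eq_sinh_div_cosh]
      exact div_nonneg (Real.sinh_nonneg_iff.2 (mul_nonneg hc.le h)) (Real.cosh_pos _).le
    · have ht : Real.tanh (c * g) ≤ 0 := by
        rw [Real.tanh_eq_sinh_div_cosh]
        apply div_nonpos_of_nonpos_of_nonneg _ (Real.cosh_pos _).le
        rw [Real.sinh_nonpos_iff]
        exact mul_nonpos_of_nonneg_of_nonpos hc.le h.le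
      nlinarith
  refine ⟨⟨α, D - α * πD sb db, fun t => by rw [key t]; ring⟩, ?_, ?_⟩
  · rw [key, hgα]; ring
  · rw [key, hgα]
    have h0 : 0 ≤ δ * Real.sqrt (πD sb db) * |OmegaD P rD vD ρD πA sb db|
        * (α * Real.tanh (c * α)) := by
      rw [← hgα]
      exact mul_nonneg (mul_nonneg (mul_nonneg hδ (Real.sqrt_nonneg _)) (abs_nonneg _)) htanh
    nlinarith [h0]


end DeltaDescent
end
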